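/- Assume 0 < η_i < 1/‖A_i‖² for i = 1, …, p and that the source condition x† − x₀ = A^* λ† holds for some λ† = (λ_1†, …, λ_p†) ∈ Y. Set M₀ := ‖x₀ − x†‖² + c₀ Σ_{i=1}^p (1/η_i) ‖λ_i†‖². Then for all integers n ≥ 0 there holds E[‖z_{n+1} − x†‖² + ((n+1)/p) Σ_{i=1}^p η_i ‖A_i x_n − y_i‖² + c₀ (r_{n+1} + ((n+1)/p) ‖x_n − x†‖²)] ≤ M₀. -/

import Mathlib

open scoped RealInnerProductSpace

/-- Expectation with respect to the first `m` i.i.d. uniformly distributed indices: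
for a quantity `f` determined by the coordinates `i_0, …, i_{m-1}` of the sample path,
`avg p hp m f = p^{-m} ∑_{(i_0,…,i_{m-1}) ∈ {1,…,p}^m} f`. -/
noncomputable def avg (p : ℕ) (hp : 0 < p) (m : ℕ) (f : (ℕ → Fin p) → ℝ) : ℝ :=
  (∑ σ : Fin m → Fin p, f (fun k => if h : k < m then σ ⟨k, h⟩ else ⟨0, hp⟩)) / (p : ℝ) ^ m

theorem avg_succ' (p : ℕ) (hp : 0 < p) (m : ℕ) (f : (ℕ → Fin p) → ℝ) :
    avg p hp (m+1) f = avg p hp m (fun ω => (∑ i, f (Function.update ω m i)) / p) := by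
  unfold avg
  have key : (∑ σ : Fin (m + 1) → Fin p, f fun k => if h : k < m + 1 then σ ⟨k, h⟩ else ⟨0, hp⟩)
      = ∑ τ : Fin m → Fin p, ∑ i : Fin p,
        f (Function.update (fun k => if h : k < m then τ ⟨k, h⟩ else ⟨0, hp⟩) m i) := by
    rw [← (Fintype.sum_equiv (Fin.snocEquiv (fun _ => Fin p))
      (fun q : Fin p × (Fin m → Fin p) =>
        f fun k => if h : k < m + 1 then Fin.snocEquiv (fun _ => Fin p) q ⟨k, h⟩ else ⟨0, hp⟩)
      (fun σ : Fin (m+1) → Fin p => f fun k => if h : k < m + 1 then σ ⟨k, h⟩ else ⟨0, hp⟩)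
      (fun q => rfl)), Fintype.sum_prod_type]
    rw [Finset.sum_comm]
    refine Finset.sum_congr rfl fun τ _ => Finset.sum_congr rfl fun i _ => ?_
    congr 1
    funext k
    rcases lt_trichotomy k m with hk | hk | hk
    · have h1 : k < m + 1 := by omega
      have h2 : k ≠ m := by omega
      simp only [dif_pos h1, dif_pos hk, Function.update_of_ne h2, dif_pos hk]
      have : (⟨k, h1⟩ : Fin (m+1)) = Fin.castSucc ⟨k, hk⟩ := rfl
      rw [Fin.snocEquiv_apply, this, Fin.snoc_castSucc]
    · subst hk
      have h1 : k < k + 1 := by omega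
      simp only [dif_pos h1, Function.update_self]
      have : (⟨k, h1⟩ : Fin (k+1)) = Fin.last k := rfl
      rw [Fin.snocEquiv_apply, this, Fin.snoc_last]
    · have h1 : ¬ k < m + 1 := by omega
      have h2 : k ≠ m := by omega
      have h3 : ¬ k < m := by omega
      simp only [dif_neg h1, Function.update_of_ne h2, dif_neg h3]
  rw [key, ← Finset.sum_div, div_div, pow_succ, mul_comm]

theorem avg_mono' (p : ℕ) (hp : 0 < p) (m : ℕ) (f g : (ℕ → Fin p) → ℝ)
    (h : ∀ ω, f ω ≤ g ω) : avg p hp m f ≤ avg p hp m g := by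
  unfold avg
  have : (0:ℝ) ≤ (p:ℝ)^m := by positivity
  gcongr
  exact h _

theorem avg_zero' (p : ℕ) (hp : 0 < p) (f : (ℕ → Fin p) → ℝ) :
    avg p hp 0 f = f (fun _ => ⟨0, hp⟩) := by
  unfold avg
  simp

set_option maxHeartbeats 1000000

/-- **Uniform energy bound (proof of Lemma SHBM.thm1).**  Assume `0 < η i < 1/‖A i‖²`
and the source condition `x† − x₀ = A* λ†` for the `x₀`-minimal norm solution `x†`.
With the exact-data iterates `(x, z)`, the dual sequence `λ` of (SHB10),
`u n = λ n + n (λ n − λ (n−1))`, `r n = ∑_i (1/η i) ‖u n i − λ† i‖²`,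
`c₀ = min_i (1 − η i ‖A i‖²)` and `M₀ = ‖x₀ − x†‖² + c₀ ∑_i (1/η i) ‖λ† i‖²`,
for all `n ≥ 0`:
`E[‖z (n+1) − x†‖² + ((n+1)/p) ∑_i η i ‖A i (x n) − y i‖²
   + c₀ (r (n+1) + ((n+1)/p) ‖x n − x†‖²)] ≤ M₀`. -/
theorem stmt_8 {p : ℕ} (hp : 0 < p) {X : Type*} [NormedAddCommGroup X]
    [InnerProductSpace ℝ X] [CompleteSpace X]
    {Y : Fin p → Type*} [∀ i, NormedAddCommGroup (Y i)] [∀ i, InnerProductSpace ℝ (Y i)]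
    [∀ i, CompleteSpace (Y i)]
    (A : ∀ i, X →L[ℝ] Y i) (y : ∀ i, Y i)
    (η : Fin p → ℝ) (hη : ∀ i, 0 < η i ∧ η i < 1 / ‖A i‖ ^ 2)
    (c₀ : ℝ) (hc₀ : IsLeast (Set.range fun i => 1 - η i * ‖A i‖ ^ 2) c₀)
    (x₀ xdag : X)
    (hdag : ∀ i, (A i) xdag = y i)
    (hmin : ∀ x' : X, (∀ i, (A i) x' = y i) → ‖xdag - x₀‖ ≤ ‖x' - x₀‖)
    (lamdag : ∀ j, Y j)
    (hsource : xdag - x₀ = ∑ j, (A j).adjoint (lamdag j))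
    (M₀ : ℝ) (hM₀ : M₀ = ‖x₀ - xdag‖ ^ 2 + c₀ * ∑ i, (η i)⁻¹ * ‖lamdag i‖ ^ 2)
    (x z : (ℕ → Fin p) → ℕ → X)
    (hx0 : ∀ ω, x ω 0 = x₀) (hz0 : ∀ ω, z ω 0 = x₀)
    (hz : ∀ ω, ∀ n : ℕ, z ω (n + 1) =
      z ω n - η (ω n) • ((A (ω n)).adjoint ((A (ω n)) (x ω n) - y (ω n))))
    (hx : ∀ ω, ∀ n : ℕ, x ω (n + 1) =
      ((n : ℝ) + 2)⁻¹ • (((n : ℝ) + 1) • x ω n + z ω (n + 1)))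
    (lam : (ℕ → Fin p) → ℕ → ∀ j, Y j)
    (hlam0 : ∀ ω, lam ω 0 = 0)
    (hlam : ∀ ω, ∀ n : ℕ,
      (∀ j : Fin p, j ≠ ω n → lam ω (n + 1) j =
        lam ω n j + ((n : ℝ) / ((n : ℝ) + 2)) • (lam ω n j - lam ω (n - 1) j)) ∧
      lam ω (n + 1) (ω n) =
        lam ω n (ω n) + ((n : ℝ) / ((n : ℝ) + 2)) • (lam ω n (ω n) - lam ω (n - 1) (ω n))
          - (((n : ℝ) + 2)⁻¹ * η (ω n)) • ((A (ω n)) (x ω n) - y (ω n)))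
    (u : (ℕ → Fin p) → ℕ → ∀ j, Y j)
    (hu : ∀ ω n j, u ω n j = lam ω n j + (n : ℝ) • (lam ω n j - lam ω (n - 1) j))
    (r : (ℕ → Fin p) → ℕ → ℝ)
    (hr : ∀ ω n, r ω n = ∑ j, (η j)⁻¹ * ‖u ω n j - lamdag j‖ ^ 2) :
    ∀ n : ℕ,
      avg p hp (n + 1) (fun ω => ‖z ω (n + 1) - xdag‖ ^ 2
          + (((n : ℝ) + 1) / p) * ∑ i, η i * ‖(A i) (x ω n) - y i‖ ^ 2
          + c₀ * (r ω (n + 1) + (((n : ℝ) + 1) / p) * ‖x ω n - xdag‖ ^ 2))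
        ≤ M₀ := by
  have hppos : (0:ℝ) < p := by exact_mod_cast hp
  have hηpos : ∀ i, 0 < η i := fun i => (hη i).1
  have hc0le : ∀ i, η i * ‖A i‖ ^ 2 ≤ 1 - c₀ := fun i => by
    have h := hc₀.2 (Set.mem_range_self i)
    change c₀ ≤ 1 - η i * ‖A i‖ ^ 2 at h
    linarith
  have hc0pos : 0 < c₀ := by
    obtain ⟨i, hi⟩ := hc₀.1
    have hA : (0:ℝ) < ‖A i‖ ^ 2 := by
      by_contra hcon
      push_neg at hcon
      have h0 : ‖A i‖ ^ 2 = 0 := le_antisymm hcon (by positivity)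
      have h2 := (hη i).2
      rw [h0, div_zero] at h2
      linarith [(hη i).1]
    have hlt : η i * ‖A i‖ ^ 2 < 1 := by
      have h2 := (hη i).2
      calc η i * ‖A i‖ ^ 2 < (1 / ‖A i‖ ^ 2) * ‖A i‖ ^ 2 := by nlinarith
        _ = 1 := one_div_mul_cancel hA.ne'
    simp only at hi
    rw [← hi]
    linarith
  -- dependence on initial segment
  have hdep : ∀ m : ℕ, ∀ ω ω' : ℕ → Fin p, (∀ k, k < m → ω k = ω' k) →
      x ω m = x ω' m ∧ z ω m = z ω' m ∧ lam ω m = lam ω' m := by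
    intro m
    induction m using Nat.strong_induction_on with
    | _ m ih =>
      match m with
      | 0 =>
        intro ω ω' _
        exact ⟨(hx0 ω).trans (hx0 ω').symm, (hz0 ω).trans (hz0 ω').symm,
          (hlam0 ω).trans (hlam0 ω').symm⟩
      | (m+1) =>
        intro ω ω' hag
        obtain ⟨hxm, hzm, hlm⟩ := ih m (Nat.lt_succ_self m) ω ω'
          (fun k hk => hag k (hk.trans (Nat.lt_succ_self m)))
        have hlm1 : lam ω (m-1) = lam ω' (m-1) :=
          (ih (m-1) (by omega) ω ω' (fun k hk => hag k (by omega))).2.2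
        have hωm : ω m = ω' m := hag m (Nat.lt_succ_self m)
        have hznew : z ω (m+1) = z ω' (m+1) := by
          rw [hz ω m, hz ω' m, ← hωm, hxm, hzm]
        refine ⟨?_, hznew, ?_⟩
        · rw [hx ω m, hx ω' m, hxm, hznew]
        · funext j
          by_cases hj : j = ω m
          · subst hj
            have h2 := (hlam ω' m).2
            rw [← hωm] at h2
            rw [(hlam ω m).2, h2, hxm, hlm, hlm1]
          · rw [(hlam ω m).1 j hj, (hlam ω' m).1 j (by rw [← hωm]; exact hj), hlm, hlm1]
  -- u recursion
  have hu1 : ∀ (ω : ℕ → Fin p) m j, u ω (m+1) j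
      = ((m:ℝ)+2) • lam ω (m+1) j - ((m:ℝ)+1) • lam ω m j := by
    intro ω m j
    rw [hu]
    simp only [Nat.add_sub_cancel]
    push_cast
    module
  have hurec_ne : ∀ (ω : ℕ → Fin p) m j, j ≠ ω m → u ω (m+1) j = u ω m j := by
    intro ω m j hj
    have h2 : ((m:ℝ)+2) ≠ 0 := by positivity
    rw [hu1, (hlam ω m).1 j hj, hu]
    match_scalars <;> (field_simp; try ring)
  have hurec_eq : ∀ (ω : ℕ → Fin p) m, u ω (m+1) (ω m)
      = u ω m (ω m) - η (ω m) • ((A (ω m)) (x ω m) - y (ω m)) := by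
    intro ω m
    have h2 : ((m:ℝ)+2) ≠ 0 := by positivity
    rw [hu1, (hlam ω m).2, hu]
    match_scalars <;> (field_simp; try ring)
  have hu0 : ∀ (ω : ℕ → Fin p) j, u ω 0 j = 0 := by
    intro ω j; rw [hu]; simp [hlam0 ω]
  -- primal-dual relation
  have hzu : ∀ (ω : ℕ → Fin p) m, z ω m = x₀ + ∑ j, (A j).adjoint (u ω m j) := by
    intro ω m
    induction m with
    | zero => simp [hz0, hu0]
    | succ m ihm =>
      rw [hz ω m, ihm]
      have hterm : ∀ j : Fin p, (A j).adjoint (u ω (m+1) j)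
          = (A j).adjoint (u ω m j)
            - (if j = ω m then η (ω m) • ((A (ω m)).adjoint ((A (ω m)) (x ω m) - y (ω m))) else 0) := by
        intro j
        by_cases hj : j = ω m
        · subst hj
          rw [hurec_eq, map_sub, map_smul, if_pos rfl]
        · rw [hurec_ne ω m j hj, if_neg hj, sub_zero]
      have hsum : ∑ j, (A j).adjoint (u ω (m+1) j)
          = (∑ j, (A j).adjoint (u ω m j))
            - η (ω m) • ((A (ω m)).adjoint ((A (ω m)) (x ω m) - y (ω m))) := by
        rw [Finset.sum_congr rfl (fun j _ => hterm j), Finset.sum_sub_distrib,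
          Finset.sum_ite_eq' Finset.univ (ω m)
            (fun _ => η (ω m) • ((A (ω m)).adjoint ((A (ω m)) (x ω m) - y (ω m)))),
          if_pos (Finset.mem_univ _)]
      rw [hsum]
      abel
  -- z in terms of x
  have hzx : ∀ (ω : ℕ → Fin p) m, z ω m = ((m:ℝ)+1) • x ω m - (m:ℝ) • x ω (m-1) := by
    intro ω m
    match m with
    | 0 => rw [hz0, hx0]; push_cast; module
    | (m+1) =>
      have h2 : ((m:ℝ)+2) ≠ 0 := by positivity
      have h3 : ((m:ℝ)+2) • x ω (m+1) = ((m:ℝ)+1) • x ω m + z ω (m+1) := by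
        rw [hx ω m, smul_smul, mul_inv_cancel₀ h2, one_smul]
      have h4 : z ω (m+1) = ((m:ℝ)+2) • x ω (m+1) - ((m:ℝ)+1) • x ω m := by
        rw [h3]; abel
      rw [h4]
      simp only [Nat.add_sub_cancel]
      push_cast
      module
  -- energy
  set W : ℕ → (ℕ → Fin p) → ℝ := fun m ω =>
    ‖z ω m - xdag‖ ^ 2 + ((m:ℝ)/p) * ∑ i, η i * ‖(A i) (x ω (m-1)) - y i‖ ^ 2
      + c₀ * (r ω m + ((m:ℝ)/p) * ‖x ω (m-1) - xdag‖ ^ 2) with hW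
  have hkey : ∀ (m : ℕ) (ω : ℕ → Fin p),
      (∑ i, W (m+1) (Function.update ω m i)) / p ≤ W m ω := by
    intro m ω
    have hself : ∀ i : Fin p, Function.update ω m i m = i := fun i => by simp
    have hagree : ∀ i : Fin p, ∀ k, k < m → Function.update ω m i k = ω k := by
      intro i k hk
      rw [Function.update_of_ne (by omega)]
    have hxupd : ∀ i : Fin p, x (Function.update ω m i) m = x ω m :=
      fun i => (hdep m _ ω (hagree i)).1
    have hzupd : ∀ i : Fin p, z (Function.update ω m i) m = z ω m :=
      fun i => (hdep m _ ω (hagree i)).2.1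
    have hlamupd : ∀ i : Fin p, lam (Function.update ω m i) m = lam ω m :=
      fun i => (hdep m _ ω (hagree i)).2.2
    have hlamupd1 : ∀ i : Fin p, lam (Function.update ω m i) (m-1) = lam ω (m-1) :=
      fun i => (hdep (m-1) _ ω (fun k hk => by
        rw [Function.update_of_ne (show k ≠ m by omega)])).2.2
    have huupd : ∀ (i : Fin p) j, u (Function.update ω m i) m j = u ω m j :=
      fun i j => by rw [hu, hu, hlamupd i, hlamupd1 i]
    -- new z value
    have hzval : ∀ i : Fin p, z (Function.update ω m i) (m+1)
        = z ω m - η i • ((A i).adjoint ((A i) (x ω m) - y i)) := by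
      intro i
      have h := hz (Function.update ω m i) m
      rw [hself i, hxupd i, hzupd i] at h
      exact h
    -- new u values
    have huval2 : ∀ i : Fin p, u (Function.update ω m i) (m+1) i
        = u ω m i - η i • ((A i) (x ω m) - y i) := by
      intro i
      have h := hurec_eq (Function.update ω m i) m
      rw [hself i, hxupd i, huupd i i] at h
      exact h
    have huval : ∀ i j : Fin p, j ≠ i → u (Function.update ω m i) (m+1) j = u ω m j := by
      intro i j hj
      have h := hurec_ne (Function.update ω m i) m j (by rw [hself i]; exact hj)
      rw [huupd i j] at h
      exact h
    -- new r value
    have hrval : ∀ i : Fin p, r (Function.update ω m i) (m+1)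
        = r ω m - 2 * ⟪u ω m i - lamdag i, (A i) (x ω m) - y i⟫
          + η i * ‖(A i) (x ω m) - y i‖ ^ 2 := by
      intro i
      have hterm : ∀ j : Fin p, (η j)⁻¹ * ‖u (Function.update ω m i) (m+1) j - lamdag j‖ ^ 2
          = (η j)⁻¹ * ‖u ω m j - lamdag j‖ ^ 2
            + (if j = i then
                - 2 * ⟪u ω m i - lamdag i, (A i) (x ω m) - y i⟫
                  + η i * ‖(A i) (x ω m) - y i‖ ^ 2 else 0) := by
        intro j
        by_cases hj : j = i
        · subst hj
          rw [huval2 j, if_pos rfl]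
          have hre : u ω m j - η j • ((A j) (x ω m) - y j) - lamdag j
              = (u ω m j - lamdag j) - η j • ((A j) (x ω m) - y j) := by abel
          rw [hre, norm_sub_sq_real, real_inner_smul_right, norm_smul, Real.norm_eq_abs,
            abs_of_pos (hηpos j), mul_pow]
          have hne : η j ≠ 0 := (hηpos j).ne'
          field_simp
          ring
        · rw [huval i j hj, if_neg hj, add_zero]
      rw [hr, hr, Finset.sum_congr rfl (fun j _ => hterm j), Finset.sum_add_distrib,
        Finset.sum_ite_eq' Finset.univ i, if_pos (Finset.mem_univ _)]
      ring
    -- coupling identity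
    have hQ : ∑ i, ⟪u ω m i - lamdag i, (A i) (x ω m) - y i⟫
        = ⟪z ω m - xdag, x ω m - xdag⟫ := by
      have h1 : ∀ i : Fin p, (A i) (x ω m) - y i = (A i) (x ω m - xdag) := fun i => by
        rw [map_sub, hdag]
      calc ∑ i, ⟪u ω m i - lamdag i, (A i) (x ω m) - y i⟫
          = ∑ i, ⟪(A i).adjoint (u ω m i - lamdag i), x ω m - xdag⟫ := by
            refine Finset.sum_congr rfl fun i _ => ?_
            rw [h1, ContinuousLinearMap.adjoint_inner_left]
        _ = ⟪∑ i, (A i).adjoint (u ω m i - lamdag i), x ω m - xdag⟫ :=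
          (sum_inner Finset.univ (fun i => (A i).adjoint (u ω m i - lamdag i)) (x ω m - xdag)).symm
        _ = ⟪(z ω m - x₀) - (xdag - x₀), x ω m - xdag⟫ := by
            congr 1
            rw [hsource]
            have hz' : z ω m - x₀ = ∑ j, (A j).adjoint (u ω m j) := by rw [hzu ω m]; abel
            rw [hz', ← Finset.sum_sub_distrib]
            exact Finset.sum_congr rfl fun i _ => map_sub _ _ _
        _ = ⟪z ω m - xdag, x ω m - xdag⟫ := by
            congr 1
            abel
    -- per-index bound
    have hb : ∀ i : Fin p, W (m+1) (Function.update ω m i)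
        ≤ (‖z ω m - xdag‖ ^ 2
            + (((m:ℝ)+1)/p) * ∑ j, η j * ‖(A j) (x ω m) - y j‖ ^ 2
            + c₀ * (r ω m + (((m:ℝ)+1)/p) * ‖x ω m - xdag‖ ^ 2))
          + η i * ((m:ℝ) * ‖(A i) (x ω (m-1)) - y i‖ ^ 2
              - ((m:ℝ)+1) * ‖(A i) (x ω m) - y i‖ ^ 2)
          - 2 * c₀ * ⟪u ω m i - lamdag i, (A i) (x ω m) - y i⟫ := by
      intro i
      have hAa : (A i) (z ω m - xdag)
          = ((m:ℝ)+1) • ((A i) (x ω m) - y i) - (m:ℝ) • ((A i) (x ω (m-1)) - y i) := by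
        rw [hzx ω m, map_sub, map_sub, map_smul, map_smul, hdag]
        module
      have hre : z ω m - η i • ((A i).adjoint ((A i) (x ω m) - y i)) - xdag
          = (z ω m - xdag) - η i • ((A i).adjoint ((A i) (x ω m) - y i)) := by abel
      have hip : ⟪z ω m - xdag, η i • ((A i).adjoint ((A i) (x ω m) - y i))⟫
          = η i * (((m:ℝ)+1) * ‖(A i) (x ω m) - y i‖ ^ 2
            - (m:ℝ) * ⟪(A i) (x ω (m-1)) - y i, (A i) (x ω m) - y i⟫) := by
        rw [real_inner_smul_right, ContinuousLinearMap.adjoint_inner_right, hAa,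
          inner_sub_left, real_inner_smul_left, real_inner_smul_left,
          real_inner_self_eq_norm_sq, real_inner_comm]
      have hef : ⟪(A i) (x ω (m-1)) - y i, (A i) (x ω m) - y i⟫
          ≤ (‖(A i) (x ω (m-1)) - y i‖ ^ 2 + ‖(A i) (x ω m) - y i‖ ^ 2) / 2 := by
        nlinarith [real_inner_le_norm ((A i) (x ω (m-1)) - y i) ((A i) (x ω m) - y i),
          sq_nonneg (‖(A i) (x ω (m-1)) - y i‖ - ‖(A i) (x ω m) - y i‖)]
      have hop : ‖(A i).adjoint ((A i) (x ω m) - y i)‖ ^ 2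
          ≤ ‖A i‖ ^ 2 * ‖(A i) (x ω m) - y i‖ ^ 2 := by
        have h1 : ‖(A i).adjoint ((A i) (x ω m) - y i)‖
            ≤ ‖(A i).adjoint‖ * ‖(A i) (x ω m) - y i‖ := ContinuousLinearMap.le_opNorm _ _
        have h2 : ‖(ContinuousLinearMap.adjoint (A i) : Y i →L[ℝ] X)‖ = ‖A i‖ :=
          LinearIsometryEquiv.norm_map ContinuousLinearMap.adjoint (A i)
        rw [h2] at h1
        nlinarith [norm_nonneg ((A i).adjoint ((A i) (x ω m) - y i)),
          norm_nonneg ((A i) (x ω m) - y i), norm_nonneg (A i)]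
      rw [hW]
      simp only [Nat.add_sub_cancel]
      rw [hzval i, hrval i, hxupd i, hre, norm_sub_sq_real, hip, norm_smul,
        Real.norm_eq_abs, abs_of_pos (hηpos i), mul_pow]
      push_cast
      have hE : (0:ℝ) ≤ ‖(A i) (x ω m) - y i‖ ^ 2 := sq_nonneg _
      have hquad : (η i) ^ 2 * ‖(A i).adjoint ((A i) (x ω m) - y i)‖ ^ 2
          ≤ η i * (1 - c₀) * ‖(A i) (x ω m) - y i‖ ^ 2 := by
        have h5 : (η i) ^ 2 * ‖(A i).adjoint ((A i) (x ω m) - y i)‖ ^ 2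
            ≤ (η i) ^ 2 * (‖A i‖ ^ 2 * ‖(A i) (x ω m) - y i‖ ^ 2) := by
          nlinarith [sq_nonneg (η i)]
        have h6 : (η i) ^ 2 * (‖A i‖ ^ 2 * ‖(A i) (x ω m) - y i‖ ^ 2)
            ≤ η i * (1 - c₀) * ‖(A i) (x ω m) - y i‖ ^ 2 := by
          have := hc0le i
          nlinarith [mul_nonneg (hηpos i).le hE, hηpos i]
        linarith
      have hcross : 2 * (η i * (m:ℝ))
            * ⟪(A i) (x ω (m-1)) - y i, (A i) (x ω m) - y i⟫
          ≤ (η i * (m:ℝ)) * (‖(A i) (x ω (m-1)) - y i‖ ^ 2 + ‖(A i) (x ω m) - y i‖ ^ 2) := by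
        have hnn : (0:ℝ) ≤ η i * (m:ℝ) := mul_nonneg (hηpos i).le (Nat.cast_nonneg m)
        nlinarith [hef]
      nlinarith [hc0pos]
    -- summation
    have hsum_le : ∑ i, W (m+1) (Function.update ω m i) ≤ (p:ℝ) * W m ω := by
      have h1 : ∑ i, W (m+1) (Function.update ω m i)
          ≤ (p:ℝ) * (‖z ω m - xdag‖ ^ 2
              + (((m:ℝ)+1)/p) * ∑ j, η j * ‖(A j) (x ω m) - y j‖ ^ 2
              + c₀ * (r ω m + (((m:ℝ)+1)/p) * ‖x ω m - xdag‖ ^ 2))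
            + ((m:ℝ) * ∑ i, η i * ‖(A i) (x ω (m-1)) - y i‖ ^ 2
              - ((m:ℝ)+1) * ∑ i, η i * ‖(A i) (x ω m) - y i‖ ^ 2)
            - 2 * c₀ * ⟪z ω m - xdag, x ω m - xdag⟫ := by
        calc ∑ i, W (m+1) (Function.update ω m i) ≤
            ∑ i, ((‖z ω m - xdag‖ ^ 2
              + (((m:ℝ)+1)/p) * ∑ j, η j * ‖(A j) (x ω m) - y j‖ ^ 2
              + c₀ * (r ω m + (((m:ℝ)+1)/p) * ‖x ω m - xdag‖ ^ 2))
              + η i * ((m:ℝ) * ‖(A i) (x ω (m-1)) - y i‖ ^ 2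
                  - ((m:ℝ)+1) * ‖(A i) (x ω m) - y i‖ ^ 2)
              - 2 * c₀ * ⟪u ω m i - lamdag i, (A i) (x ω m) - y i⟫) :=
            Finset.sum_le_sum fun i _ => hb i
          _ = _ := by
            simp only [Finset.sum_sub_distrib, Finset.sum_add_distrib, Finset.sum_const,
              Finset.card_univ, Fintype.card_fin, nsmul_eq_mul]
            have ht : ∑ i, η i * ((m:ℝ) * ‖(A i) (x ω (m-1)) - y i‖ ^ 2
                  - ((m:ℝ)+1) * ‖(A i) (x ω m) - y i‖ ^ 2)
                = (m:ℝ) * ∑ i, η i * ‖(A i) (x ω (m-1)) - y i‖ ^ 2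
                  - ((m:ℝ)+1) * ∑ i, η i * ‖(A i) (x ω m) - y i‖ ^ 2 := by
              rw [Finset.mul_sum, Finset.mul_sum, ← Finset.sum_sub_distrib]
              exact Finset.sum_congr rfl fun i _ => by ring
            have hs : ∑ i, 2 * c₀ * ⟪u ω m i - lamdag i, (A i) (x ω m) - y i⟫
                = 2 * c₀ * ⟪z ω m - xdag, x ω m - xdag⟫ := by
              rw [← Finset.mul_sum, hQ]
            rw [ht, hs]
            ring
      have hzd : z ω m - xdag = ((m:ℝ)+1) • (x ω m - xdag) - (m:ℝ) • (x ω (m-1) - xdag) := by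
        rw [hzx ω m]; module
      have hinner : ((m:ℝ)+2) / 2 * ‖x ω m - xdag‖ ^ 2 - (m:ℝ)/2 * ‖x ω (m-1) - xdag‖ ^ 2
          ≤ ⟪z ω m - xdag, x ω m - xdag⟫ := by
        rw [hzd, inner_sub_left, real_inner_smul_left, real_inner_smul_left,
          real_inner_self_eq_norm_sq]
        have h7 : ⟪x ω (m-1) - xdag, x ω m - xdag⟫
            ≤ (‖x ω (m-1) - xdag‖ ^ 2 + ‖x ω m - xdag‖ ^ 2) / 2 := by
          nlinarith [real_inner_le_norm (x ω (m-1) - xdag) (x ω m - xdag),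
            sq_nonneg (‖x ω (m-1) - xdag‖ - ‖x ω m - xdag‖)]
        nlinarith [Nat.cast_nonneg (α := ℝ) m]
      rw [hW]
      simp only []
      have hD : (0:ℝ) ≤ ‖x ω m - xdag‖ ^ 2 := sq_nonneg _
      have hexp : (p:ℝ) * (‖z ω m - xdag‖ ^ 2
            + ((m:ℝ)/p) * ∑ i, η i * ‖(A i) (x ω (m-1)) - y i‖ ^ 2
            + c₀ * (r ω m + ((m:ℝ)/p) * ‖x ω (m-1) - xdag‖ ^ 2))
          = (p:ℝ) * ‖z ω m - xdag‖ ^ 2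
            + (m:ℝ) * ∑ i, η i * ‖(A i) (x ω (m-1)) - y i‖ ^ 2
            + (p:ℝ) * c₀ * r ω m + c₀ * (m:ℝ) * ‖x ω (m-1) - xdag‖ ^ 2 := by
        field_simp
        ring
      rw [hexp]
      have h8 : (p:ℝ) * (‖z ω m - xdag‖ ^ 2
              + (((m:ℝ)+1)/p) * ∑ j, η j * ‖(A j) (x ω m) - y j‖ ^ 2
              + c₀ * (r ω m + (((m:ℝ)+1)/p) * ‖x ω m - xdag‖ ^ 2))
          = (p:ℝ) * ‖z ω m - xdag‖ ^ 2
            + ((m:ℝ)+1) * ∑ j, η j * ‖(A j) (x ω m) - y j‖ ^ 2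
            + (p:ℝ) * c₀ * r ω m + c₀ * ((m:ℝ)+1) * ‖x ω m - xdag‖ ^ 2 := by
        field_simp
        ring
      rw [h8] at h1
      nlinarith [hc0pos, hinner]
    rw [div_le_iff₀ hppos]
    calc ∑ i, W (m+1) (Function.update ω m i) ≤ (p:ℝ) * W m ω := hsum_le
      _ = W m ω * p := by ring
  have hW0 : ∀ ω, W 0 ω = M₀ := by
    intro ω
    rw [hW]
    have hr0 : r ω 0 = ∑ i, (η i)⁻¹ * ‖lamdag i‖ ^ 2 := by
      rw [hr]
      refine Finset.sum_congr rfl fun j _ => ?_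
      rw [hu0, zero_sub, norm_neg]
    simp only [Nat.cast_zero, Nat.zero_sub, zero_div, zero_mul, add_zero, hz0, hr0, hM₀]
  have main : ∀ m : ℕ, avg p hp (m+1) (W (m+1)) ≤ M₀ := by
    intro m
    induction m with
    | zero =>
      rw [avg_succ']
      calc avg p hp 0 (fun ω => (∑ i, W 1 (Function.update ω 0 i)) / p)
          ≤ avg p hp 0 (W 0) := avg_mono' p hp 0 _ _ (fun ω => hkey 0 ω)
        _ = M₀ := by rw [avg_zero', hW0]
    | succ m ihm =>
      rw [avg_succ']
      calc avg p hp (m+1) (fun ω => (∑ i, W (m+2) (Function.update ω (m+1) i)) / p)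
          ≤ avg p hp (m+1) (W (m+1)) := avg_mono' p hp (m+1) _ _ (fun ω => hkey (m+1) ω)
        _ ≤ M₀ := ihm
  intro n
  have hfe : (fun ω => ‖z ω (n + 1) - xdag‖ ^ 2
          + (((n : ℝ) + 1) / p) * ∑ i, η i * ‖(A i) (x ω n) - y i‖ ^ 2
          + c₀ * (r ω (n + 1) + (((n : ℝ) + 1) / p) * ‖x ω n - xdag‖ ^ 2))
      = W (n+1) := by
    funext ω
    rw [hW]
    simp only [Nat.add_sub_cancel]
    push_cast
    ring
  rw [hfe]
  exact main n
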